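/- Let n ≥ 6 and let A be an n×n real Higham² matrix with P = D = I and ‖A‖_max = 1, i.e. A = [[L̂, 0],[−𝟏ᵀ, 1]]·[[Û, u],[0, 2^{n−1}]] where L̂ is the (n−1)×(n−1) lower unitriangular matrix with all strictly lower entries −1, Û is an invertible (n−1)×(n−1) upper triangular matrix, u = (1, 2, 4, …, 2^{n−2})ᵀ, 𝟏 is the all-ones vector, every entry of L̂Û has absolute value at most 1, and every entry of the row vector 𝟏ᵀÛ has absolute value at most 1. Fix indices i, j ≤ n and ε ∈ ℝ with |ε| < 1, and suppose A + ε·e_i e_jᵀ admits an LU factorization with last pivot p_ε^{(i,j)} satisfying √n < |p_ε^{(i,j)}| < 2^{n−5}. Then the ℓ₂ condition number satisfies κ₂(A) = ‖A‖₂·‖A⁻¹‖₂ ≥ √n / (3·|ε|·|p_ε^{(i,j)}|). -/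

import Mathlib

open Matrix

/-- `M` is lower triangular with all diagonal entries equal to `1`. -/
def IsLowerUnitri {k : ℕ} (M : Matrix (Fin k) (Fin k) ℝ) : Prop :=
  (∀ i, M i i = 1) ∧ ∀ i j : Fin k, i < j → M i j = 0

/-- `M` is upper triangular. -/
def IsUpperTri {k : ℕ} (M : Matrix (Fin k) (Fin k) ℝ) : Prop :=
  ∀ i j : Fin k, j < i → M i j = 0

/-- The `m × m` lower unitriangular matrix with all strictly lower entries `-1`. -/
def highamLhat (m : ℕ) : Matrix (Fin m) (Fin m) ℝ :=
  Matrix.of fun i j => if j < i then -1 else if i = j then 1 else 0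

/-- The Higham² matrix with `P = D = I` determined by the invertible upper triangular
matrix `Û`, i.e. `A = [[L̂, 0],[-𝟏ᵀ, 1]] * [[Û, u],[0, 2^(n-1)]]` with
`u = (1, 2, …, 2^(n-2))ᵀ`, viewed as an `n × n = (m+1) × (m+1)` matrix. -/
noncomputable def highamA {m : ℕ} (Uhat : Matrix (Fin m) (Fin m) ℝ) :
    Matrix (Fin (m + 1)) (Fin (m + 1)) ℝ :=
  Matrix.reindex finSumFinEquiv finSumFinEquiv
    (Matrix.fromBlocks (highamLhat m) 0 (Matrix.of fun (_ : Fin 1) (_ : Fin m) => (-1 : ℝ))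
        (Matrix.of fun (_ : Fin 1) (_ : Fin 1) => (1 : ℝ)) *
      Matrix.fromBlocks Uhat (Matrix.of fun (k : Fin m) (_ : Fin 1) => (2 : ℝ) ^ (k : ℕ)) 0
        (Matrix.of fun (_ : Fin 1) (_ : Fin 1) => (2 : ℝ) ^ m))

/-- The operator norm of a square real matrix induced by the Euclidean vector norm. -/
noncomputable def opNorm2 {k : ℕ} (M : Matrix (Fin k) (Fin k) ℝ) : ℝ :=
  ‖Matrix.toEuclideanCLM (𝕜 := ℝ) M‖

lemma opNorm2_nonneg {k : ℕ} (M : Matrix (Fin k) (Fin k) ℝ) : 0 ≤ opNorm2 M :=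
  norm_nonneg _

lemma euclidean_abs_apply_le_norm {k : ℕ} (y : EuclideanSpace ℝ (Fin k)) (a : Fin k) :
    |y a| ≤ ‖y‖ := by
  have h3 : inner ℝ (EuclideanSpace.single a (1:ℝ)) y = y a := by
    simpa using EuclideanSpace.inner_single_left (𝕜 := ℝ) a 1 y
  calc |y a| = ‖inner ℝ (EuclideanSpace.single a (1:ℝ)) y‖ := by rw [h3]; simp
    _ ≤ ‖EuclideanSpace.single a (1:ℝ)‖ * ‖y‖ := norm_inner_le_norm _ _
    _ = ‖y‖ := by simp

lemma abs_entry_le_opNorm2 {k : ℕ} (M : Matrix (Fin k) (Fin k) ℝ) (a b : Fin k) :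
    |M a b| ≤ opNorm2 M := by
  have h1 : ‖toEuclideanCLM (𝕜 := ℝ) M (EuclideanSpace.single b 1)‖
      ≤ opNorm2 M * ‖EuclideanSpace.single b (1:ℝ)‖ :=
    (toEuclideanCLM (𝕜 := ℝ) M).le_opNorm _
  rw [EuclideanSpace.norm_single, norm_one, mul_one] at h1
  set y := toEuclideanCLM (𝕜 := ℝ) M (EuclideanSpace.single b 1) with hy
  have h2 : y a = M a b := by
    rw [hy]
    show toEuclideanCLM (𝕜 := ℝ) M (WithLp.toLp 2 (Pi.single b 1)) a = _
    rw [Matrix.toEuclideanCLM_toLp]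
    show Matrix.toLin' M (Pi.single b 1) a = M a b
    simp [Matrix.toLin'_apply]
  calc |M a b| = |y a| := by rw [h2]
    _ ≤ ‖y‖ := euclidean_abs_apply_le_norm y a
    _ ≤ opNorm2 M := h1

lemma sqrt_le_opNorm2 {k : ℕ} (M : Matrix (Fin k) (Fin k) ℝ) (b : Fin k)
    (hcol : ∀ a, M a b = 1) : Real.sqrt k ≤ opNorm2 M := by
  have h1 : ‖toEuclideanCLM (𝕜 := ℝ) M (EuclideanSpace.single b 1)‖
      ≤ opNorm2 M * ‖EuclideanSpace.single b (1:ℝ)‖ :=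
    (toEuclideanCLM (𝕜 := ℝ) M).le_opNorm _
  rw [EuclideanSpace.norm_single, norm_one, mul_one] at h1
  have h2 : toEuclideanCLM (𝕜 := ℝ) M (EuclideanSpace.single b 1)
      = (WithLp.equiv 2 (Fin k → ℝ)).symm (fun _ => 1) := by
    show toEuclideanCLM (𝕜 := ℝ) M (WithLp.toLp 2 (Pi.single b 1)) = _
    rw [Matrix.toEuclideanCLM_toLp]
    congr 1
    funext a
    show Matrix.toLin' M (Pi.single b 1) a = 1
    simp [Matrix.toLin'_apply, hcol a]
  rw [h2] at h1
  have h3 : ‖(WithLp.equiv 2 (Fin k → ℝ)).symm (fun _ => 1)‖ = Real.sqrt k := by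
    rw [EuclideanSpace.norm_eq]
    simp
  rw [h3] at h1
  exact h1


lemma geom2 (n : ℕ) : ∑ k ∈ Finset.range n, (2:ℝ)^k = 2^n - 1 := by
  induction n with
  | zero => simp
  | succ n ih => rw [Finset.sum_range_succ, ih, pow_succ]; ring

lemma geomhalf (n : ℕ) : ∑ k ∈ Finset.range n, ((2:ℝ)⁻¹)^(k+1) = 1 - (2:ℝ)⁻¹^n := by
  induction n with
  | zero => simp
  | succ n ih => rw [Finset.sum_range_succ, ih, pow_succ]; ring

lemma H1 {m : ℕ} (a : Fin m) :
    ∑ k ∈ Finset.range m, (if k < (a:ℕ) then (-(2:ℝ)^k) else if k = (a:ℕ) then 2^k else 0) = 1 := by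
  have ha : (a:ℕ) + 1 ≤ m := a.isLt
  rw [← Finset.sum_subset (Finset.range_subset_range.2 ha)]
  · rw [Finset.sum_range_succ]
    have h1 : ∑ k ∈ Finset.range (a:ℕ),
        (if k < (a:ℕ) then (-(2:ℝ)^k) else if k = (a:ℕ) then 2^k else 0)
        = ∑ k ∈ Finset.range (a:ℕ), (-(2:ℝ)^k) := by
      apply Finset.sum_congr rfl
      intro k hk
      rw [if_pos (Finset.mem_range.1 hk)]
    rw [h1, if_neg (lt_irrefl _), if_pos rfl, Finset.sum_neg_distrib, geom2]
    ring
  · intro k _ hk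
    rw [Finset.mem_range, not_lt] at hk
    rw [if_neg (by omega), if_neg (by omega)]

lemma H2 {m : ℕ} (c : Fin m) :
    ∑ k ∈ Finset.range m, (if (c:ℕ) < k then (-((2:ℝ)⁻¹)^(k+1)) else if k = (c:ℕ) then (2:ℝ)⁻¹^(k+1) else 0)
      = (2:ℝ)⁻¹^m := by
  have hc : (c:ℕ) + 1 ≤ m := c.isLt
  have hsplit : Finset.range m = Finset.range ((c:ℕ)+1) ∪ Finset.Ico ((c:ℕ)+1) m := by
    rw [Finset.range_eq_Ico, Finset.range_eq_Ico]; exact (Finset.Ico_union_Ico_eq_Ico (a := 0) (b := (c:ℕ)+1) (c := m) (by omega) (by omega)).symm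
  rw [hsplit, Finset.sum_union (by rw [Finset.range_eq_Ico]; exact Finset.Ico_disjoint_Ico_consecutive 0 _ _)]
  have h1 : ∑ k ∈ Finset.range ((c:ℕ)+1),
      (if (c:ℕ) < k then (-((2:ℝ)⁻¹)^(k+1)) else if k = (c:ℕ) then (2:ℝ)⁻¹^(k+1) else 0)
      = (2:ℝ)⁻¹^((c:ℕ)+1) := by
    rw [Finset.sum_range_succ, if_neg (lt_irrefl _), if_pos rfl]
    rw [Finset.sum_eq_zero, zero_add]
    intro k hk
    rw [Finset.mem_range] at hk
    rw [if_neg (by omega), if_neg (by omega)]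
  have h2 : ∑ k ∈ Finset.Ico ((c:ℕ)+1) m,
      (if (c:ℕ) < k then (-((2:ℝ)⁻¹)^(k+1)) else if k = (c:ℕ) then (2:ℝ)⁻¹^(k+1) else 0)
      = -((1 - (2:ℝ)⁻¹^m) - (1 - (2:ℝ)⁻¹^((c:ℕ)+1))) := by
    have hcong : ∀ k ∈ Finset.Ico ((c:ℕ)+1) m,
        (if (c:ℕ) < k then (-((2:ℝ)⁻¹)^(k+1)) else if k = (c:ℕ) then (2:ℝ)⁻¹^(k+1) else 0)
        = -((2:ℝ)⁻¹^(k+1)) := by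
      intro k hk
      rw [Finset.mem_Ico] at hk
      rw [if_pos (by omega)]
    rw [Finset.sum_congr rfl hcong, Finset.sum_neg_distrib, Finset.sum_Ico_eq_sub _ hc,
      geomhalf, geomhalf]
  rw [h1, h2]
  ring

/-- the explicit last row of `A⁻¹` -/
noncomputable def v0 (m : ℕ) : Fin (m+1) → ℝ := fun k =>
  Sum.elim (fun a : Fin m => ((2:ℝ)⁻¹)^((a:ℕ)+1)) (fun _ : Fin 1 => ((2:ℝ)⁻¹)^m)
    (finSumFinEquiv.symm k)

lemma v0_last {m : ℕ} : v0 m (Fin.last m) = ((2:ℝ)⁻¹)^m := by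
  rw [v0, finSumFinEquiv_symm_last]; rfl

lemma abs_v0_le {m : ℕ} (hm : 1 ≤ m) (k : Fin (m+1)) : |v0 m k| ≤ 1/2 := by
  rw [v0]
  rcases finSumFinEquiv.symm k with a | b
  · simp only [Sum.elim_inl]
    rw [abs_of_nonneg (by positivity)]
    calc ((2:ℝ)⁻¹)^((a:ℕ)+1) ≤ ((2:ℝ)⁻¹)^1 :=
      pow_le_pow_of_le_one (by norm_num) (by norm_num) (by omega)
    _ = 1/2 := by norm_num
  · simp only [Sum.elim_inr]
    rw [abs_of_nonneg (by positivity)]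
    calc ((2:ℝ)⁻¹)^m ≤ ((2:ℝ)⁻¹)^1 :=
      pow_le_pow_of_le_one (by norm_num) (by norm_num) hm
    _ = 1/2 := by norm_num

lemma highamA_last_col {m : ℕ} (Uhat : Matrix (Fin m) (Fin m) ℝ) (a : Fin (m+1)) :
    highamA Uhat a (Fin.last m) = 1 := by
  rw [highamA, reindex_apply, submatrix_apply, finSumFinEquiv_symm_last, mul_apply,
    Fintype.sum_sum_type]
  rcases h : finSumFinEquiv.symm a with a' | b'
  · simp only [fromBlocks_apply₁₁, fromBlocks_apply₁₂, fromBlocks_apply₂₂, Fin.sum_univ_one]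
    rw [Matrix.zero_apply, zero_mul, add_zero]
    have : ∀ c : Fin m, (highamLhat m) a' c * (Matrix.of fun (k : Fin m) (_ : Fin 1) => (2:ℝ)^(k:ℕ)) c 0
        = (if (c:ℕ) < (a':ℕ) then (-(2:ℝ)^(c:ℕ)) else if (c:ℕ) = (a':ℕ) then 2^(c:ℕ) else 0) := by
      intro c
      simp only [highamLhat, Matrix.of_apply, Fin.lt_def, Fin.ext_iff]
      rcases lt_trichotomy (c:ℕ) (a':ℕ) with h1 | h1 | h1
      · rw [if_pos h1, if_pos h1]; ring
      · rw [if_neg (by omega), if_pos (by omega), if_neg (by omega), if_pos (by omega)]; ring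
      · rw [if_neg (by omega), if_neg (by omega), if_neg (by omega), if_neg (by omega)]; ring
    rw [Finset.sum_congr rfl (fun c _ => this c)]
    rw [Fin.sum_univ_eq_sum_range
      (fun k => (if k < (a':ℕ) then (-(2:ℝ)^k) else if k = (a':ℕ) then 2^k else 0))]
    exact H1 a'
  · simp only [fromBlocks_apply₂₁, fromBlocks_apply₁₂, fromBlocks_apply₂₂, Fin.sum_univ_one,
      Matrix.of_apply]
    have : ∀ c : Fin m, (-1 : ℝ) * (2:ℝ)^(c:ℕ) = -((2:ℝ)^(c:ℕ)) := fun c => by ring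
    rw [Finset.sum_congr rfl (fun c _ => this c)]
    rw [Finset.sum_neg_distrib, Fin.sum_univ_eq_sum_range (fun k => (2:ℝ)^k), geom2]
    ring

lemma v0_vecMul {m : ℕ} (Uhat : Matrix (Fin m) (Fin m) ℝ) :
    v0 m ᵥ* highamA Uhat = Pi.single (Fin.last m) 1 := by
  have hcomp : v0 m ∘ finSumFinEquiv
      = Sum.elim (fun a : Fin m => ((2:ℝ)⁻¹)^((a:ℕ)+1)) (fun _ : Fin 1 => ((2:ℝ)⁻¹)^m) := by
    funext s
    simp [v0]
  have step1 : (Sum.elim (fun a : Fin m => ((2:ℝ)⁻¹)^((a:ℕ)+1)) (fun _ : Fin 1 => ((2:ℝ)⁻¹)^m)) ᵥ*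
      (Matrix.fromBlocks (highamLhat m) 0 (Matrix.of fun (_ : Fin 1) (_ : Fin m) => (-1 : ℝ))
        (Matrix.of fun (_ : Fin 1) (_ : Fin 1) => (1 : ℝ)))
      = Sum.elim (0 : Fin m → ℝ) (fun _ : Fin 1 => ((2:ℝ)⁻¹)^m) := by
    rw [vecMul_fromBlocks]
    funext s
    rcases s with c | b
    · simp only [Sum.elim_inl, Pi.add_apply, Matrix.vecMul, dotProduct, Fin.sum_univ_one,
        Matrix.of_apply, Pi.zero_apply]
      have hterm : ∀ a : Fin m, ((2:ℝ)⁻¹)^((a:ℕ)+1) * (highamLhat m) a c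
          = (if (c:ℕ) < (a:ℕ) then (-((2:ℝ)⁻¹)^((a:ℕ)+1)) else if (a:ℕ) = (c:ℕ) then ((2:ℝ)⁻¹)^((a:ℕ)+1) else 0) := by
        intro a
        simp only [highamLhat, Matrix.of_apply, Fin.lt_def, Fin.ext_iff]
        rcases lt_trichotomy (c:ℕ) (a:ℕ) with h1 | h1 | h1
        · rw [if_pos h1, if_pos h1]; ring
        · rw [if_neg (by omega), if_pos (by omega), if_neg (by omega), if_pos (by omega)]; ring
        · rw [if_neg (by omega), if_neg (by omega), if_neg (by omega), if_neg (by omega)]; ring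
      simp only [Function.comp_apply, Sum.elim_inl, Sum.elim_inr]
      rw [Finset.sum_congr rfl (fun a _ => hterm a)]
      have := Fin.sum_univ_eq_sum_range
        (fun k => (if (c:ℕ) < k then (-((2:ℝ)⁻¹)^(k+1)) else if k = (c:ℕ) then ((2:ℝ)⁻¹)^(k+1) else 0)) m
      rw [this, H2 c]
      ring
    · simp only [Sum.elim_inr, Pi.add_apply, Matrix.vecMul, dotProduct, Fin.sum_univ_one,
        Matrix.of_apply, Matrix.zero_apply, Sum.elim_inl]
      rw [Finset.sum_eq_zero (fun a _ => by simp)]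
      simp
  have step2 : (Sum.elim (0 : Fin m → ℝ) (fun _ : Fin 1 => ((2:ℝ)⁻¹)^m)) ᵥ*
      (Matrix.fromBlocks Uhat (Matrix.of fun (k : Fin m) (_ : Fin 1) => (2 : ℝ) ^ (k : ℕ)) 0
        (Matrix.of fun (_ : Fin 1) (_ : Fin 1) => (2 : ℝ) ^ m))
      = Sum.elim (0 : Fin m → ℝ) (fun _ : Fin 1 => 1) := by
    rw [vecMul_fromBlocks]
    funext s
    rcases s with c | b
    · simp only [Sum.elim_inl, Pi.add_apply, Pi.zero_apply]
      simp [Matrix.vecMul, dotProduct]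
    · simp only [Sum.elim_inr, Pi.add_apply, Matrix.vecMul, dotProduct, Fin.sum_univ_one,
        Matrix.of_apply, Sum.elim_inl, Pi.zero_apply]
      simp only [Function.comp_apply, Sum.elim_inl, Sum.elim_inr, Pi.zero_apply]
      rw [Finset.sum_eq_zero (fun a _ => by simp), zero_add, ← mul_pow]
      norm_num
  funext b
  rw [highamA, reindex]
  rw [Equiv.coe_fn_mk, submatrix_vecMul_equiv (e₁ := finSumFinEquiv.symm)]
  simp only [Equiv.symm_symm, Function.comp_apply]
  rw [hcomp, ← Matrix.vecMul_vecMul, step1, step2]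
  rcases h : finSumFinEquiv.symm b with a' | b'
  · have hb : b ≠ Fin.last m := by
      intro hb
      rw [hb, finSumFinEquiv_symm_last] at h
      exact Sum.inr_ne_inl h
    rw [Pi.single_apply, if_neg hb]
    simp
  · have hb : b = Fin.last m := by
      have := congrArg finSumFinEquiv h
      rw [Equiv.apply_symm_apply] at this
      rw [this]
      have : b' = 0 := Subsingleton.elim _ _
      rw [this]
      rfl
    rw [hb, Pi.single_apply, if_pos rfl]
    simp

lemma highamA_det_isUnit {m : ℕ} (Uhat : Matrix (Fin m) (Fin m) ℝ)
    (hUdet : IsUnit Uhat.det) : IsUnit (highamA Uhat).det := by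
  rw [highamA, reindex_apply, Matrix.det_submatrix_equiv_self, Matrix.det_mul,
    Matrix.det_fromBlocks_zero₁₂, Matrix.det_fromBlocks_zero₂₁]
  have hL : (highamLhat m).det = 1 := by
    rw [Matrix.det_of_lowerTriangular (highamLhat m)
      (by intro x y hxy; simp only [highamLhat, Matrix.of_apply];
          rw [if_neg (by exact not_lt.2 (le_of_lt hxy)), if_neg (by exact Fin.ne_of_lt hxy)]
          )]
    · simp [highamLhat]
  rw [hL, Matrix.det_fin_one, Matrix.det_fin_one]
  simp only [Matrix.of_apply, one_mul, mul_one]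
  exact (hUdet.mul (by norm_num : IsUnit ((2:ℝ)^m)))


set_option maxHeartbeats 1000000 in
theorem stmt_15_core {m : ℕ} (hm : 5 ≤ m)
    (A B : Matrix (Fin (m + 1)) (Fin (m + 1)) ℝ)
    (i j : Fin (m + 1)) (ε : ℝ) (hε : |ε| < 1)
    (L' U' : Matrix (Fin (m + 1)) (Fin (m + 1)) ℝ)
    (hL'1 : ∀ k, L' k k = 1) (hL'2 : ∀ a b : Fin (m+1), a < b → L' a b = 0)
    (hU' : ∀ a b : Fin (m+1), b < a → U' a b = 0)
    (hfact : A + Matrix.single i j ε = L' * U')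
    (hAB : A * B = 1) (hBA : B * A = 1)
    (hrowB : ∀ k, |B (Fin.last m) k| ≤ 1/2)
    (hBnn : B (Fin.last m) (Fin.last m) = ((2:ℝ)⁻¹)^m)
    (NA a : ℝ) (hNA : Real.sqrt (m+1) ≤ NA)
    (ha : ∀ k l, |B k l| ≤ a)
    (hlow : Real.sqrt (m + 1) < |U' (Fin.last m) (Fin.last m)|)
    (hhigh : |U' (Fin.last m) (Fin.last m)| < (2 : ℝ) ^ (m - 4)) :
    Real.sqrt (m + 1) / (3 * |ε| * |U' (Fin.last m) (Fin.last m)|) ≤ NA * a := by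
  set n := Fin.last m with hn
  set p := U' n n with hpdef
  set R := Real.sqrt (m+1) with hR
  have ha0 : 0 ≤ a := le_trans (abs_nonneg _) (ha n n)
  have hR1 : 1 ≤ R := by
    have h1 := Real.sq_sqrt (show (0:ℝ) ≤ (m:ℝ) + 1 by positivity)
    have h2 := Real.sqrt_nonneg ((m:ℝ) + 1)
    have h3 : (1:ℝ) ≤ (m:ℝ) + 1 := by have := Nat.cast_nonneg (α := ℝ) m; linarith
    nlinarith [h1, h2, h3]
  have hNA0 : 0 ≤ NA := le_trans (by linarith) hNA
  have hpabs : 1 < |p| := lt_of_le_of_lt hR1 hlow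
  have hp0 : p ≠ 0 := by
    intro h; rw [h] at hpabs; simp at hpabs; linarith
  by_cases hε0 : ε = 0
  · rw [hε0]
    simp only [abs_zero, mul_zero, zero_mul]
    rw [div_zero]
    positivity
  have hea : 0 < |ε| := abs_pos.mpr hε0
  -- L' is invertible
  have hL'det : IsUnit L'.det := by
    have h : L'.det = 1 := by
      rw [Matrix.det_of_lowerTriangular L' (fun x y hxy => hL'2 x y hxy)]
      exact Finset.prod_eq_one (fun x _ => hL'1 x)
    rw [h]; exact isUnit_one
  set Li := L'⁻¹ with hLi
  have hLiL : Li * L' = 1 := nonsing_inv_mul L' hL'det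
  have hLinn : Li n n = 1 := by
    have h := congrFun (congrFun hLiL n) n
    rw [Matrix.mul_apply] at h
    rw [Finset.sum_eq_single n (fun k _ hk => by
      rw [hL'2 k n (lt_of_le_of_ne (Fin.le_last k) hk), mul_zero]) (by simp)] at h
    rw [hL'1 n, mul_one] at h
    rw [h, Matrix.one_apply_eq]
  -- the vector r
  set r : Fin (m+1) → ℝ := fun k => p⁻¹ * Li n k with hr
  have hrn : r n = p⁻¹ := by rw [hr]; simp [hLinn]
  have hrM : ∀ b, (r ᵥ* (L' * U')) b = (if b = n then (1:ℝ) else 0) := by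
    intro b
    have h1 : (r ᵥ* (L' * U')) b = p⁻¹ * ((Li * (L' * U')) n b) := by
      rw [Matrix.vecMul, Matrix.mul_apply, dotProduct, Finset.mul_sum]
      exact Finset.sum_congr rfl (fun k _ => by rw [hr]; ring)
    rw [h1, ← Matrix.mul_assoc, hLiL, Matrix.one_mul]
    by_cases hb : b = n
    · rw [hb, if_pos rfl, ← hpdef, inv_mul_cancel₀ hp0]
    · rw [if_neg hb, hU' n b (lt_of_le_of_ne (Fin.le_last b) hb), mul_zero]
  -- the vector x = last column of B
  set x : Fin (m+1) → ℝ := fun k => B k n with hx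
  have hAx : ∀ k, (A *ᵥ x) k = (if k = n then (1:ℝ) else 0) := by
    intro k
    have h1 : (A *ᵥ x) k = (A * B) k n := by
      rw [Matrix.mulVec, dotProduct, Matrix.mul_apply]
    rw [h1, hAB, Matrix.one_apply]
  -- identity I1
  have hE : ∀ y : Fin (m+1) → ℝ, ∀ k,
      ((Matrix.single i j ε) *ᵥ y) k = (if k = i then ε * y j else 0) := by
    intro y k
    rw [Matrix.single_mulVec]
    by_cases hk : k = i
    · rw [hk]; simp
    · simp [Function.update, hk]
  have hMx : ∀ k, ((L' * U') *ᵥ x) k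
      = (if k = n then (1:ℝ) else 0) + (if k = i then ε * x j else 0) := by
    intro k
    rw [← hfact, Matrix.add_mulVec, Pi.add_apply, hAx, hE]
  have I1 : ((2:ℝ)⁻¹)^m = p⁻¹ + ε * x j * r i := by
    have h1 : r ⬝ᵥ ((L' * U') *ᵥ x) = (r ᵥ* (L' * U')) ⬝ᵥ x := dotProduct_mulVec r _ x
    have h2 : (r ᵥ* (L' * U')) ⬝ᵥ x = x n := by
      rw [dotProduct]
      rw [Finset.sum_eq_single n (fun k _ hk => by rw [hrM k, if_neg hk, zero_mul]) (by simp)]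
      rw [hrM n, if_pos rfl, one_mul]
    have h3 : r ⬝ᵥ ((L' * U') *ᵥ x) = r n + ε * x j * r i := by
      rw [dotProduct]
      have : ∀ k, r k * ((L' * U') *ᵥ x) k
          = (if k = n then r k else 0) + (if k = i then r k * (ε * x j) else 0) := by
        intro k
        rw [hMx k, mul_add, mul_ite, mul_one, mul_zero, mul_ite, mul_zero]
      rw [Finset.sum_congr rfl (fun k _ => this k), Finset.sum_add_distrib,
        Finset.sum_ite_eq' Finset.univ n r, Finset.sum_ite_eq' Finset.univ i
          (fun k => r k * (ε * x j))]
      simp only [Finset.mem_univ, if_pos]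
      ring
    have := h3.symm.trans (h1.trans h2)
    rw [hx] at this
    simp only at this
    rw [hBnn] at this
    rw [← this, hrn]
  -- identity I2
  have hrA : ∀ b, (r ᵥ* A) b = (if b = n then (1:ℝ) else 0) - (if b = j then ε * r i else 0) := by
    intro b
    have hA' : A = L' * U' - Matrix.single i j ε := by
      rw [← hfact]; exact (add_sub_cancel_right A _).symm
    rw [hA', Matrix.vecMul_sub, Pi.sub_apply, hrM]
    congr 1
    rw [Matrix.vecMul, dotProduct]
    by_cases hb : b = j
    · rw [hb, Finset.sum_eq_single i (fun k _ hk => by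
        simp [Matrix.single, Ne.symm hk]) (by simp)]
      simp [Matrix.single]
      ring
    · rw [if_neg hb, Finset.sum_eq_zero]
      intro k _
      simp [Matrix.single, hb, Ne.symm hb]
  have I2 : r i = B n i - ε * r i * B j i := by
    have h1 : (r ᵥ* A) ᵥ* B = r := by
      rw [Matrix.vecMul_vecMul, hAB, Matrix.vecMul_one]
    have h2 := congrFun h1 i
    rw [Matrix.vecMul, dotProduct] at h2
    have : ∀ k, (r ᵥ* A) k * B k i
        = (if k = n then B k i else 0) - (if k = j then (ε * r i) * B k i else 0) := by
      intro k
      rw [hrA k, sub_mul, ite_mul, one_mul, zero_mul, ite_mul, zero_mul]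
    rw [Finset.sum_congr rfl (fun k _ => this k), Finset.sum_sub_distrib,
      Finset.sum_ite_eq' Finset.univ n (fun k => B k i),
      Finset.sum_ite_eq' Finset.univ j (fun k => (ε * r i) * B k i)] at h2
    simp only [Finset.mem_univ, if_pos] at h2
    exact h2.symm
  -- arithmetic conclusion
  set s := B j i with hs
  set t := r i with ht
  set q := x j with hq
  have hsa : |s| ≤ a := ha j i
  have hqa : |q| ≤ a := ha j n
  have hw : |B n i| ≤ 1/2 := hrowB i
  have hkey : 1 / (3 * |ε| * |p|) ≤ a := by
    by_cases hcase : |1 + ε * s| < 1/2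
    · -- |ε * s| > 1/2
      have h1 : 1/2 < |ε * s| := by
        have h3 : |(1 + ε * s) + (-(ε * s))| ≤ |1 + ε * s| + |(-(ε * s))| := abs_add_le _ _
        have h3' : ((1:ℝ) + ε * s) + (-(ε * s)) = 1 := by ring
        rw [h3', abs_one, abs_neg] at h3
        linarith
      have h4 : 1 / (2 * |ε|) < a := by
        rw [abs_mul] at h1
        rw [div_lt_iff₀ (by positivity)]
        calc (1:ℝ) < 2 * (|ε| * |s|) := by linarith
          _ ≤ a * (2 * |ε|) := by nlinarith
      have h5 : 1 / (3 * |ε| * |p|) ≤ 1 / (2 * |ε|) := by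
        apply div_le_div_of_nonneg_left one_pos.le (by positivity)
        nlinarith
      linarith
    · push_neg at hcase
      -- |t| ≤ 1
      have hteq : t * (1 + ε * s) = B n i := by
        linear_combination I2
      have ht1 : |t| ≤ 1 := by
        by_contra h
        push_neg at h
        have : 1/2 < |t| * |1 + ε * s| := by nlinarith
        rw [← abs_mul, hteq] at this
        linarith
      -- I1 gives the bound
      have h6 : |p⁻¹ - ((2:ℝ)⁻¹)^m| ≤ |ε| * a := by
        have h7 : p⁻¹ - ((2:ℝ)⁻¹)^m = -(ε * q * t) := by rw [I1]; ring
        rw [h7, abs_neg, abs_mul, abs_mul]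
        calc |ε| * |q| * |t| ≤ |ε| * a * 1 := by
              apply mul_le_mul (mul_le_mul le_rfl hqa (abs_nonneg _) (abs_nonneg _)) ht1
                (abs_nonneg _) (by positivity)
          _ = |ε| * a := by ring
      have hppos : (0:ℝ) < |p| := by linarith
      have h8 : ((2:ℝ)⁻¹)^m ≤ |p|⁻¹ / 16 := by
        have h9 : (2:ℝ)^(m-4) * 16 = 2^m := by
          rw [show (16:ℝ) = 2^4 by norm_num, ← pow_add]
          congr 1
          omega
        have h10 : |p| * 16 < 2^m := by linarith [hhigh, h9]
        have h11 : ((2:ℝ)^m)⁻¹ ≤ (|p| * 16)⁻¹ :=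
          inv_anti₀ (by positivity) h10.le
        calc ((2:ℝ)⁻¹)^m = ((2:ℝ)^m)⁻¹ := by rw [inv_pow]
          _ ≤ (|p| * 16)⁻¹ := h11
          _ = |p|⁻¹ / 16 := by rw [mul_inv]; ring
      have h11 : |p|⁻¹ - ((2:ℝ)⁻¹)^m ≤ |ε| * a := by
        have habs : |p|⁻¹ = |p⁻¹| := (abs_inv p).symm
        have h12 : |p⁻¹| - |((2:ℝ)⁻¹)^m| ≤ |p⁻¹ - ((2:ℝ)⁻¹)^m| := abs_sub_abs_le_abs_sub _ _
        have h13 : |((2:ℝ)⁻¹)^m| = ((2:ℝ)⁻¹)^m := abs_of_nonneg (by positivity)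
        rw [habs]
        linarith
      have h14 : (15/16) * |p|⁻¹ ≤ |ε| * a := by linarith
      have h15 : (15/16 : ℝ) ≤ |ε| * a * |p| := by
        have h16 := mul_le_mul_of_nonneg_right h14 (abs_nonneg p)
        rw [mul_assoc, inv_mul_cancel₀ (by positivity : |p| ≠ 0), mul_one] at h16
        exact h16
      rw [div_le_iff₀ (by positivity)]
      nlinarith [h15]
  calc R / (3 * |ε| * |p|) = 1 / (3 * |ε| * |p|) * R := by ring
    _ ≤ a * NA := mul_le_mul hkey hNA (by linarith : (0:ℝ) ≤ R) ha0
    _ = NA * a := by ring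


theorem stmt_15 {m : ℕ} (hm : 5 ≤ m)
    (Uhat : Matrix (Fin m) (Fin m) ℝ) (hUhat : IsUpperTri Uhat) (hUdet : IsUnit Uhat.det)
    (hLU : ∀ a b : Fin m, |(highamLhat m * Uhat) a b| ≤ 1)
    (hrowU : ∀ b : Fin m, |Matrix.vecMul (fun _ => (1 : ℝ)) Uhat b| ≤ 1)
    (i j : Fin (m + 1)) (ε : ℝ) (hε : |ε| < 1)
    (L' U' : Matrix (Fin (m + 1)) (Fin (m + 1)) ℝ)
    (hL' : IsLowerUnitri L') (hU' : IsUpperTri U')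
    (hfact : highamA Uhat + Matrix.single i j ε = L' * U')
    (hlow : Real.sqrt (m + 1) < |U' (Fin.last m) (Fin.last m)|)
    (hhigh : |U' (Fin.last m) (Fin.last m)| < (2 : ℝ) ^ (m - 4)) :
    Real.sqrt (m + 1) / (3 * |ε| * |U' (Fin.last m) (Fin.last m)|)
      ≤ opNorm2 (highamA Uhat) * opNorm2 (highamA Uhat)⁻¹ := by
  have hAdet : IsUnit (highamA Uhat).det := highamA_det_isUnit Uhat hUdet
  set A := highamA Uhat with hA
  set B := A⁻¹ with hB
  have hAB : A * B = 1 := Matrix.mul_nonsing_inv A hAdet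
  have hBA : B * A = 1 := Matrix.nonsing_inv_mul A hAdet
  have hrowB' : ∀ k, B (Fin.last m) k = v0 m k := by
    have h1 : (v0 m ᵥ* A) ᵥ* B = v0 m := by
      rw [Matrix.vecMul_vecMul, hAB, Matrix.vecMul_one]
    rw [hA, v0_vecMul] at h1
    intro k
    have h2 := congrFun h1 k
    rw [Matrix.single_vecMul] at h2
    simpa using h2
  have hrowB : ∀ k, |B (Fin.last m) k| ≤ 1/2 := by
    intro k
    rw [hrowB' k]
    exact abs_v0_le (by omega) k
  have hBnn : B (Fin.last m) (Fin.last m) = ((2:ℝ)⁻¹)^m := by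
    rw [hrowB' (Fin.last m), v0_last]
  have hNA : Real.sqrt (m+1) ≤ opNorm2 A := by
    have := sqrt_le_opNorm2 A (Fin.last m) (fun a => by rw [hA]; exact highamA_last_col Uhat a)
    simpa using this
  have haB : ∀ k l, |B k l| ≤ opNorm2 B := fun k l => abs_entry_le_opNorm2 B k l
  exact stmt_15_core hm A B i j ε hε L' U' hL'.1 hL'.2 hU' hfact hAB hBA hrowB hBnn
    (opNorm2 A) (opNorm2 B) hNA haB hlow hhigh
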